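/- For all real x, y and λ > 0, ∫_y^∞ Φ(λ + (x−z)/(2λ)) e^{−z} (1 − z²/2) dz = −(y²/2 + y) e^{−y} Φ(λ + (x−y)/(2λ)) + (2λ⁴ − 2λ²x + x + x²/2) e^{−x} (1 − Φ(λ + (y−x)/(2λ))) + (−2λ³ + λx + λy + 2λ) e^{−x} φ(λ + (y−x)/(2λ)). -/

import Mathlib

open Real MeasureTheory Filter Set

/-- Standard normal density. -/
noncomputable def phi (t : ℝ) : ℝ := (Real.sqrt (2 * Real.pi))⁻¹ * Real.exp (-t ^ 2 / 2)

/-- Standard normal distribution function. -/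
noncomputable def Phi (t : ℝ) : ℝ := ∫ s in Set.Iic t, phi s

/-!
Read the right-hand side as a function `F` of the lower limit `y`. Differentiating, the `Φ`-terms
give minus the integrand, and the `φ`-terms cancel because of the Gaussian identity
`e^{-x} φ(λ + (y - x)/(2λ)) = e^{-y} φ(λ + (x - y)/(2λ))` (the two arguments add up to `2λ` and differ
by `(y - x)/λ`). As `F → 0` at `+∞` and the integrand is `O((1 + z²) e^{-z})`, the
fundamental theorem of calculus on `(y, ∞)` gives the formula.
-/

open Topology ProbabilityTheory

lemma phi_eq_gaussianPDFReal : phi = gaussianPDFReal 0 1 := by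
  ext t
  simp [phi, gaussianPDFReal]

lemma continuous_phi : Continuous phi := by
  unfold phi; fun_prop

lemma integrable_phi : Integrable phi := by
  simpa [phi_eq_gaussianPDFReal] using integrable_gaussianPDFReal 0 1

lemma integral_phi : ∫ t, phi t = 1 := by
  simpa [phi_eq_gaussianPDFReal] using integral_gaussianPDFReal_eq_one 0 one_ne_zero

lemma phi_eq_exp_mul_phi (a b : ℝ) : phi a = exp ((b ^ 2 - a ^ 2) / 2) * phi b := by
  simp only [phi, mul_left_comm _ (_⁻¹), ← exp_add]
  ring_nf

lemma hasDerivAt_phi (t : ℝ) : HasDerivAt phi (-t * phi t) t := by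
  have h : HasDerivAt (fun s => -s ^ 2 / 2) (-t) t := by
    simpa [neg_div] using ((hasDerivAt_pow 2 t).fun_neg.div_const 2)
  exact (h.exp.const_mul (√(2 * π))⁻¹).congr_deriv (by simp only [phi]; ring)

lemma tendsto_abs_rpow_mul_phi_atTop (s : ℝ) :
    Tendsto (fun t => |t| ^ s * phi t) atTop (𝓝 0) := by
  have h := ((tendsto_rpow_abs_mul_exp_neg_mul_sq_cocompact (a := 1 / 2) one_half_pos s).mono_left
    atTop_le_cocompact).const_mul (√(2 * π))⁻¹
  rw [mul_zero] at h
  refine h.congr fun t => ?_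
  simp only [phi]
  ring_nf

lemma tendsto_phi_atTop : Tendsto phi atTop (𝓝 0) := by
  simpa using tendsto_abs_rpow_mul_phi_atTop 0

lemma tendsto_mul_phi_atTop : Tendsto (fun t => t * phi t) atTop (𝓝 0) := by
  refine tendsto_zero_iff_abs_tendsto_zero _ |>.mpr ?_
  simpa [Function.comp_def, abs_mul, abs_of_nonneg (show 0 ≤ phi _ by unfold phi; positivity)]
    using tendsto_abs_rpow_mul_phi_atTop 1

lemma hasDerivAt_Phi (t : ℝ) : HasDerivAt Phi (phi t) t := by
  have hPhi : Phi = fun s => Phi 0 + ∫ u in (0 : ℝ)..s, phi u := by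
    ext s
    rw [← intervalIntegral.integral_Iic_sub_Iic integrable_phi.integrableOn
      integrable_phi.integrableOn]
    simp [Phi]
  rw [hPhi]
  exact (intervalIntegral.integral_hasDerivAt_right integrable_phi.intervalIntegrable
    (continuous_phi.stronglyMeasurableAtFilter _ _) continuous_phi.continuousAt).const_add _

lemma continuous_Phi : Continuous Phi :=
  continuous_iff_continuousAt.mpr fun t => (hasDerivAt_Phi t).continuousAt

lemma norm_Phi_le_one (t : ℝ) : ‖Phi t‖ ≤ 1 := by
  have hphi : 0 ≤ phi := fun s => by unfold phi; positivity
  unfold Phi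
  rw [norm_of_nonneg (setIntegral_nonneg measurableSet_Iic fun s _ => hphi s), ← integral_phi]
  exact setIntegral_le_integral integrable_phi (Eventually.of_forall hphi)

lemma tendsto_Phi_atTop : Tendsto Phi atTop (𝓝 1) := by
  rw [← integral_phi]
  exact (aecover_Iic tendsto_id).integral_tendsto_of_countably_generated integrable_phi

lemma integrableOn_Ioi_pow_mul_exp_neg (n : ℕ) (a : ℝ) :
    IntegrableOn (fun z => z ^ n * exp (-z)) (Ioi a) := by
  refine integrable_of_isBigO_exp_neg one_half_pos (by fun_prop) ?_
  refine ((isLittleO_pow_exp_pos_mul_atTop n one_half_pos).mul_isBigO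
    (Asymptotics.isBigO_refl (fun z => exp (-z)) atTop)).isBigO.congr_right fun z => ?_
  rw [← exp_add]
  ring_nf

noncomputable def phiIntegrand (x l z : ℝ) : ℝ :=
  Phi (l + (x - z) / (2 * l)) * exp (-z) * (1 - z ^ 2 / 2)

noncomputable def phiPrimitive (x l z : ℝ) : ℝ :=
  -(z ^ 2 / 2 + z) * exp (-z) * Phi (l + (x - z) / (2 * l))
    + (2 * l ^ 4 - 2 * l ^ 2 * x + x + x ^ 2 / 2) * exp (-x) * (1 - Phi (l + (z - x) / (2 * l)))
    + (-2 * l ^ 3 + l * x + l * z + 2 * l) * exp (-x) * phi (l + (z - x) / (2 * l))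

lemma phi_add_sub_div_eq (x l z : ℝ) (hl : l ≠ 0) :
    phi (l + (z - x) / (2 * l)) = exp (x - z) * phi (l + (x - z) / (2 * l)) := by
  rw [phi_eq_exp_mul_phi _ (l + (x - z) / (2 * l))]
  congr 2
  field_simp
  ring

lemma hasDerivAt_phiPrimitive (x : ℝ) {l : ℝ} (hl : l ≠ 0) (z : ℝ) :
    HasDerivAt (phiPrimitive x l) (-phiIntegrand x l z) z := by
  have hu : HasDerivAt (fun z => l + (x - z) / (2 * l)) (-(2 * l)⁻¹) z := by
    simpa [neg_div] using (((hasDerivAt_id z).const_sub x).div_const (2 * l)).const_add l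
  have hv : HasDerivAt (fun z => l + (z - x) / (2 * l)) (2 * l)⁻¹ z := by
    simpa using (((hasDerivAt_id z).sub_const x).div_const (2 * l)).const_add l
  have hexp : HasDerivAt (fun z => exp (-z)) (-exp (-z)) z := by
    simpa using (hasDerivAt_neg z).exp
  have hpoly : HasDerivAt (fun z => -(z ^ 2 / 2 + z)) (-(z + 1)) z :=
    ((((hasDerivAt_pow 2 z).div_const 2).fun_add (hasDerivAt_id' z)).fun_neg).congr_deriv
      (by simp)
  have hlin : HasDerivAt (fun z => -2 * l ^ 3 + l * x + l * z + 2 * l) l z := by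
    simpa using (((hasDerivAt_id z).const_mul l).const_add (-2 * l ^ 3 + l * x)).add_const (2 * l)
  have h1 := (hpoly.mul hexp).mul ((hasDerivAt_Phi _).comp z hu)
  have h2 := (((hasDerivAt_Phi _).comp z hv).const_sub 1).const_mul
    ((2 * l ^ 4 - 2 * l ^ 2 * x + x + x ^ 2 / 2) * exp (-x))
  have h3 := (hlin.mul_const (exp (-x))).mul ((hasDerivAt_phi _).comp z hv)
  have h := (h1.add h2).add h3
  refine h.congr_deriv ?_
  simp only [phiIntegrand, Pi.mul_apply, Function.comp_apply]
  rw [phi_add_sub_div_eq x l z hl, exp_sub, exp_neg x, exp_neg z]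
  generalize Phi (l + (x - z) / (2 * l)) = P
  generalize phi (l + (x - z) / (2 * l)) = p
  field_simp
  ring

lemma tendsto_phiPrimitive_atTop (x : ℝ) {l : ℝ} (hl : 0 < l) :
    Tendsto (phiPrimitive x l) atTop (𝓝 0) := by
  have hv : Tendsto (fun z => l + (z - x) / (2 * l)) atTop atTop :=
    tendsto_atTop_add_const_left _ _
      ((tendsto_atTop_add_const_right _ _ tendsto_id).atTop_div_const (by positivity))
  have hpoly : Tendsto (fun z => -(z ^ 2 / 2 + z) * exp (-z)) atTop (𝓝 0) := by
    have h := ((tendsto_pow_mul_exp_neg_atTop_nhds_zero 2).const_mul (-1 / 2)).add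
      ((tendsto_pow_mul_exp_neg_atTop_nhds_zero 1).const_mul (-1))
    rw [mul_zero, mul_zero, add_zero] at h
    exact h.congr fun z => by ring
  have h1 := hpoly.zero_mul_isBoundedUnder_le (g := fun z => Phi (l + (x - z) / (2 * l)))
    (isBoundedUnder_of ⟨1, fun z => norm_Phi_le_one _⟩)
  have h2 := ((tendsto_Phi_atTop.comp hv).const_sub 1).const_mul
    ((2 * l ^ 4 - 2 * l ^ 2 * x + x + x ^ 2 / 2) * exp (-x))
  have h3 := (((tendsto_phi_atTop.const_mul (-4 * l ^ 3 + 2 * l * x + 2 * l)).add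
    (tendsto_mul_phi_atTop.const_mul (2 * l ^ 2))).comp hv).const_mul (exp (-x))
  simp only [sub_self, mul_zero, add_zero] at h2 h3
  have h3' : Tendsto (fun z => (-2 * l ^ 3 + l * x + l * z + 2 * l) * exp (-x)
      * phi (l + (z - x) / (2 * l))) atTop (𝓝 0) := h3.congr fun z => by
    simp only [Function.comp_apply]
    field_simp
    ring
  have h := (h1.add h2).add h3'
  rw [add_zero, add_zero] at h
  exact h

lemma integrableOn_phiIntegrand (x l y : ℝ) : IntegrableOn (phiIntegrand x l) (Ioi y) := by
  have h : IntegrableOn (fun z => z ^ 0 * exp (-z) - 2⁻¹ * (z ^ 2 * exp (-z))) (Ioi y) :=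
    (integrableOn_Ioi_pow_mul_exp_neg 0 y).sub ((integrableOn_Ioi_pow_mul_exp_neg 2 y).const_mul _)
  have hu : Continuous fun z => l + (x - z) / (2 * l) := by fun_prop
  refine IntegrableOn.congr_fun (h.bdd_mul (continuous_Phi.comp hu).aestronglyMeasurable
    (Eventually.of_forall fun z => norm_Phi_le_one _)) (fun z _ => ?_) measurableSet_Ioi
  simp only [phiIntegrand, Function.comp_apply]
  ring

theorem stmt5 (x y l : ℝ) (hl : 0 < l) :
    (∫ z in Set.Ioi y, Phi (l + (x - z) / (2 * l)) * Real.exp (-z) * (1 - z ^ 2 / 2))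
      = -(y ^ 2 / 2 + y) * Real.exp (-y) * Phi (l + (x - y) / (2 * l))
        + (2 * l ^ 4 - 2 * l ^ 2 * x + x + x ^ 2 / 2) * Real.exp (-x)
          * (1 - Phi (l + (y - x) / (2 * l)))
        + (-2 * l ^ 3 + l * x + l * y + 2 * l) * Real.exp (-x)
          * phi (l + (y - x) / (2 * l)) := by
  have hderiv := hasDerivAt_phiPrimitive x hl.ne'
  have h := integral_Ioi_of_hasDerivAt_of_tendsto (hderiv y).continuousAt.continuousWithinAt
    (fun z _ => hderiv z) (integrableOn_phiIntegrand x l y).neg (tendsto_phiPrimitive_atTop x hl)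
  rw [integral_neg, zero_sub, neg_inj] at h
  exact h
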